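/- Fix integers n > k > 1, an n-point dataset X ⊂ ℝ^{n−1}, and a partition C_1 ⊔ ⋯ ⊔ C_k = [n] such that the Calinski–Harabasz index satisfies CH(X; C_1,…,C_k) > 1. Then for every ε with 1 < ε ≤ CH(X; C_1,…,C_k), there exists an n-point dataset X_ε ⊂ ℝ^{n−1} with CH(X_ε; C_1,…,C_k) = ε, and yet for every perplexity ρ ∈ (1, n−1), TSNE_ρ(X) = TSNE_ρ(X_ε). -/

import Mathlib

open scoped BigOperators RealInnerProductSpace
noncomputable section

namespace TSNEPaper

variable {n k : ℕ} {E F : Type*}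

/-- The set of nearest neighbors of point `i` (used for the `σ = 0` limit of the
conditional affinity). -/
def nearestSet [NormedAddCommGroup E] (X : Fin n → E) (i : Fin n) : Finset (Fin n) :=
  (Finset.univ.erase i).filter fun j => ∀ l ∈ Finset.univ.erase i, ‖X i - X j‖ ≤ ‖X i - X l‖

/-- Conditional t-SNE affinity `P_{j|i}(X; σ)`.  For `σ = 0` we take the limiting value
as `σ → 0⁺`, which puts equal mass on the nearest neighbors of `i`. -/
def condAffinity [NormedAddCommGroup E] (X : Fin n → E) (σ : ℝ) (i j : Fin n) : ℝ :=
  if j = i then 0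
  else if σ = 0 then (if j ∈ nearestSet X i then ((nearestSet X i).card : ℝ)⁻¹ else 0)
  else Real.exp (-‖X i - X j‖ ^ 2 / (2 * σ ^ 2)) /
      ∑ l ∈ Finset.univ.erase i, Real.exp (-‖X i - X l‖ ^ 2 / (2 * σ ^ 2))

/-- Base-2 Shannon entropy of a distribution on `Fin n`. -/
def entropy2 (p : Fin n → ℝ) : ℝ := -∑ j, p j * Real.logb 2 (p j)

/-- `σ` is a perplexity-`ρ`-calibrated bandwidth for point `i`: it is nonnegative and
minimizes the gap between the entropy of `P_{·|i}(X;σ)` and `log₂ ρ`. -/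
def IsCalibrated [NormedAddCommGroup E] (X : Fin n → E) (ρ : ℝ) (i : Fin n) (σ : ℝ) : Prop :=
  0 ≤ σ ∧ ∀ σ' : ℝ, 0 ≤ σ' →
    |entropy2 (condAffinity X σ i) - Real.logb 2 ρ| ≤
      |entropy2 (condAffinity X σ' i) - Real.logb 2 ρ|

/-- The calibrated bandwidth `σ_i^*` (well defined by uniqueness of the minimizer). -/
def sigmaStar [NormedAddCommGroup E] (X : Fin n → E) (ρ : ℝ) (i : Fin n) : ℝ :=
  Classical.epsilon (IsCalibrated X ρ i)

/-- Symmetrized input affinity `P_{ij}(X)`. -/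
def inAffinity [NormedAddCommGroup E] (X : Fin n → E) (ρ : ℝ) (i j : Fin n) : ℝ :=
  if i = j then 0
  else (condAffinity X (sigmaStar X ρ j) j i + condAffinity X (sigmaStar X ρ i) i j) / (2 * n)

/-- Output affinity `Q_{ij}(Y)`. -/
def outAffinity [NormedAddCommGroup F] (Y : Fin n → F) (i j : Fin n) : ℝ :=
  if i = j then 0
  else (1 + ‖Y i - Y j‖ ^ 2)⁻¹ /
    ∑ p ∈ Finset.univ.offDiag, (1 + ‖Y p.1 - Y p.2‖ ^ 2)⁻¹

/-- The t-SNE loss `L_X(Y) = KL(P(X) ‖ Q(Y))`. -/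
def tsneLoss {d : ℕ} [NormedAddCommGroup E] (X : Fin n → E) (ρ : ℝ)
    (Y : Fin n → EuclideanSpace ℝ (Fin d)) : ℝ :=
  ∑ p ∈ Finset.univ.offDiag,
    inAffinity X ρ p.1 p.2 * Real.log (inAffinity X ρ p.1 p.2 / outAffinity Y p.1 p.2)

/-- The set of stationary t-SNE outputs in `ℝ^d` for input `X` and perplexity `ρ`. -/
def TSNE [NormedAddCommGroup E] (d : ℕ) (ρ : ℝ) (X : Fin n → E) :
    Set (Fin n → EuclideanSpace ℝ (Fin d)) :=
  {Y : Fin n → EuclideanSpace ℝ (Fin d) | fderiv ℝ (tsneLoss X ρ) Y = 0}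

/-- The image of t-SNE: all stationary outputs over all `n`-point inputs in `ℝ^{n-1}`. -/
def IMTSNE (n d : ℕ) (ρ : ℝ) : Set (Fin n → EuclideanSpace ℝ (Fin d)) :=
  ⋃ X : Fin n → EuclideanSpace ℝ (Fin (n - 1)), TSNE d ρ X

/-- The `m`-th cluster of the partition of `[n]` encoded by the labelling `ℓ`. -/
def cluster (ℓ : Fin n → Fin k) (m : Fin k) : Finset (Fin n) :=
  Finset.univ.filter fun i => ℓ i = m

/-- Average within-cluster distance `a(i)`. -/
def aScore [NormedAddCommGroup E] (X : Fin n → E) (ℓ : Fin n → Fin k) (i : Fin n) : ℝ :=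
  (∑ j ∈ cluster ℓ (ℓ i), ‖X i - X j‖) / (((cluster ℓ (ℓ i)).card : ℝ) - 1)

/-- Closest average across-cluster distance `b(i)`. -/
def bScore [NormedAddCommGroup E] (X : Fin n → E) (ℓ : Fin n → Fin k) (i : Fin n) : ℝ :=
  sInf {r : ℝ | ∃ m : Fin k, m ≠ ℓ i ∧
    r = (∑ j ∈ cluster ℓ m, ‖X i - X j‖) / ((cluster ℓ m).card : ℝ)}

/-- Silhouette score of point `i`. -/
def silhouette [NormedAddCommGroup E] (X : Fin n → E) (ℓ : Fin n → Fin k) (i : Fin n) : ℝ :=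
  if (cluster ℓ (ℓ i)).card = 1 then 0
  else (bScore X ℓ i - aScore X ℓ i) / max (aScore X ℓ i) (bScore X ℓ i)

/-- Average silhouette score `S̄(X; C₁,…,C_k)`. -/
def avgSilhouette [NormedAddCommGroup E] (X : Fin n → E) (ℓ : Fin n → Fin k) : ℝ :=
  (∑ i, silhouette X ℓ i) / (n : ℝ)

/-- Centroid `E(S)` of the points indexed by `S`. -/
def centroid [NormedAddCommGroup E] [NormedSpace ℝ E] (X : Fin n → E)
    (S : Finset (Fin n)) : E :=
  ((S.card : ℝ))⁻¹ • ∑ i ∈ S, X i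

/-- Numerator (between-cluster term) of the Calinski–Harabasz index. -/
def chNum [NormedAddCommGroup E] [NormedSpace ℝ E] (X : Fin n → E) (ℓ : Fin n → Fin k) : ℝ :=
  ((k : ℝ) - 1)⁻¹ *
    ∑ m : Fin k, ((cluster ℓ m).card : ℝ) *
      ‖centroid X (cluster ℓ m) - centroid X Finset.univ‖ ^ 2

/-- Denominator (within-cluster term) of the Calinski–Harabasz index. -/
def chDen [NormedAddCommGroup E] [NormedSpace ℝ E] (X : Fin n → E) (ℓ : Fin n → Fin k) : ℝ :=
  ((n : ℝ) - (k : ℝ))⁻¹ *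
    ∑ m : Fin k, ∑ i ∈ cluster ℓ m, ‖X i - centroid X (cluster ℓ m)‖ ^ 2

/-- Calinski–Harabasz index, valued in `[0,∞]`, with the conventions `CH = 1` when both
numerator and denominator vanish and `CH = ∞` when only the denominator vanishes. -/
def CHindex [NormedAddCommGroup E] [NormedSpace ℝ E] (X : Fin n → E) (ℓ : Fin n → Fin k) :
    EReal :=
  if chDen X ℓ = 0 then (if chNum X ℓ = 0 then 1 else ⊤)
  else ((chNum X ℓ / chDen X ℓ : ℝ) : EReal)

/-- Minimum between-cluster distance (numerator of the Dunn index). -/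
def diNum [NormedAddCommGroup E] (X : Fin n → E) (ℓ : Fin n → Fin k) : ℝ :=
  sInf {r : ℝ | ∃ i j : Fin n, ℓ i ≠ ℓ j ∧ r = ‖X i - X j‖}

/-- Maximum within-cluster distance (denominator of the Dunn index). -/
def diDen [NormedAddCommGroup E] (X : Fin n → E) (ℓ : Fin n → Fin k) : ℝ :=
  sSup {r : ℝ | ∃ i j : Fin n, ℓ i = ℓ j ∧ r = ‖X i - X j‖}

/-- Dunn index, valued in `[0,∞]`, with the conventions `DI = 1` when both numerator and
denominator vanish and `DI = ∞` when only the denominator vanishes. -/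
def DIindex [NormedAddCommGroup E] (X : Fin n → E) (ℓ : Fin n → Fin k) : EReal :=
  if diDen X ℓ = 0 then (if diNum X ℓ = 0 then 1 else ⊤)
  else ((diNum X ℓ / diDen X ℓ : ℝ) : EReal)

/-- `Y` is an `(α, Y i₀)`-outlier configuration: there is a hyperplane (with unit normal `v`)
separating `Y i₀` from the remaining points with margin width at least
`α · max{1, diam(Y ∖ {Y i₀})}`. -/
def IsOutlierConfig [NormedAddCommGroup F] [InnerProductSpace ℝ F] (Y : Fin n → F)
    (i0 : Fin n) (α : ℝ) : Prop :=
  0 < α ∧ ∃ v : F, ‖v‖ = 1 ∧ ∀ i : Fin n, i ≠ i0 →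
    α * max 1 (Metric.diam (Y '' {i : Fin n | i ≠ i0})) ≤ ⟪Y i - Y i0, v⟫

/-- The outlier number `α(Y, y₀)`: the largest `α` for which `Y` is an `(α, Y i₀)`-outlier
configuration (`0` if there is none). -/
def outlierNumber [NormedAddCommGroup F] [InnerProductSpace ℝ F] (Y : Fin n → F)
    (i0 : Fin n) : ℝ :=
  sSup {α : ℝ | IsOutlierConfig Y i0 α}

/-!
Adding the same constant `c ≥ 0` to every squared pairwise distance changes neither the nearest
neighbours nor the normalised Gaussian kernel rows, hence neither the input affinities nor the
t-SNE loss. Such a shift is realised in `ℝ^{n-1}` by appending the vertices of a regular simplex in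
new orthogonal directions and re-embedding the resulting `n` points isometrically.

The Calinski–Harabasz index is a function of the pairwise distances alone: by the parallel axis
theorem and `2|S| ∑_{i ∈ S} ‖x_i - E(S)‖² = ∑_{i,j ∈ S} ‖x_i - x_j‖²`, the shift adds
`c/2 · (K - 1)` to the between-cluster and `c/2 · (n - K)` to the within-cluster sum of squares,
`K` being the number of nonempty clusters. As `c` grows the index therefore moves continuously from
`CH(X)` towards `(K - 1)(n - k) / ((k - 1)(n - K)) ≤ 1`, passing through every `ε ∈ (1, CH(X)]`.
-/

open Finset Module

theorem exists_linearIsometry_of_finrank_le {V W : Type*}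
    [NormedAddCommGroup V] [InnerProductSpace ℝ V] [FiniteDimensional ℝ V]
    [NormedAddCommGroup W] [InnerProductSpace ℝ W] [FiniteDimensional ℝ W]
    (h : finrank ℝ V ≤ finrank ℝ W) : Nonempty (V →ₗᵢ[ℝ] W) := by
  let bV := stdOrthonormalBasis ℝ V
  let w := stdOrthonormalBasis ℝ W ∘ Fin.castLE h
  have hw : Orthonormal ℝ w :=
    (stdOrthonormalBasis ℝ W).orthonormal.comp _ (Fin.castLE_injective h)
  let f := bV.toBasis.constr ℝ w
  have hf : f ∘ bV.toBasis = w := funext fun i => bV.toBasis.constr_basis ℝ w i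
  exact ⟨f.isometryOfOrthonormal (v := bV.toBasis) (by simp [bV.orthonormal])
    (hf ▸ hw)⟩

theorem exists_fin_sub_one_norm_sub_eq {F : Type*} [NormedAddCommGroup F]
    [InnerProductSpace ℝ F] (y : Fin n → F) :
    ∃ x : Fin n → EuclideanSpace ℝ (Fin (n - 1)), ∀ i j, ‖x i - x j‖ = ‖y i - y j‖ := by
  cases n with
  | zero => exact ⟨Fin.elim0, fun i => i.elim0⟩
  | succ m =>
    let S := Submodule.span ℝ (Set.range fun i : Fin m => y i.succ - y 0)
    have : FiniteDimensional ℝ S := .span_of_finite ℝ (Set.finite_range _)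
    have hS : finrank ℝ S ≤ finrank ℝ (EuclideanSpace ℝ (Fin (m + 1 - 1))) := by
      simpa [Set.finrank] using finrank_range_le_card (R := ℝ) fun i : Fin m => y i.succ - y 0
    obtain ⟨L⟩ := exists_linearIsometry_of_finrank_le hS
    have hmem : ∀ i, y i - y 0 ∈ S := Fin.cases (by simp) fun i => Submodule.subset_span ⟨i, rfl⟩
    refine ⟨fun i => L ⟨y i - y 0, hmem i⟩, fun i j => ?_⟩
    rw [← map_sub, L.norm_map]
    simp [Submodule.coe_norm]

section SqDistShift

variable {E E' F : Type*}

def IsSqDistShift [NormedAddCommGroup E] [NormedAddCommGroup E'] (c : ℝ) (X : Fin n → E)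
    (X' : Fin n → E') : Prop :=
  ∀ i j, i ≠ j → ‖X' i - X' j‖ ^ 2 = ‖X i - X j‖ ^ 2 + c

theorem norm_single_sub_single_sq {ι : Type*} [Fintype ι] [DecidableEq ι] {i j : ι}
    (hij : i ≠ j) :
    ‖(EuclideanSpace.single i (1 : ℝ) - EuclideanSpace.single j 1 : EuclideanSpace ℝ ι)‖ ^ 2 =
      2 := by
  have h := EuclideanSpace.orthonormal_single (𝕜 := ℝ) (ι := ι)
  rw [norm_sub_sq_real, h.1 i, h.1 j, h.2 hij]
  norm_num

theorem exists_isSqDistShift [NormedAddCommGroup F] [InnerProductSpace ℝ F] (X : Fin n → F)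
    {c : ℝ} (hc : 0 ≤ c) :
    ∃ X' : Fin n → EuclideanSpace ℝ (Fin (n - 1)), IsSqDistShift c X X' := by
  let y : Fin n → WithLp 2 (F × EuclideanSpace ℝ (Fin n)) := fun i =>
    WithLp.toLp 2 (X i, √(c / 2) • EuclideanSpace.single i 1)
  obtain ⟨X', hX'⟩ := exists_fin_sub_one_norm_sub_eq y
  refine ⟨X', fun i j hij => ?_⟩
  rw [hX', WithLp.prod_norm_sq_eq_of_L2]
  simp only [y, WithLp.sub_fst, WithLp.sub_snd, WithLp.toLp_fst, WithLp.toLp_snd, ← smul_sub,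
    norm_smul, mul_pow, Real.norm_eq_abs, sq_abs, Real.sq_sqrt (by positivity : 0 ≤ c / 2),
    norm_single_sub_single_sq hij]
  ring

end SqDistShift

section Affinity

variable {E E' : Type*} [NormedAddCommGroup E] [NormedAddCommGroup E'] {c : ℝ}
  {X : Fin n → E} {X' : Fin n → E'}

theorem IsSqDistShift.sum_norm_sub_sq (h : IsSqDistShift c X X') {s : Finset (Fin n)} {i : Fin n}
    (hi : i ∈ s) :
    ∑ j ∈ s, ‖X' i - X' j‖ ^ 2 = ∑ j ∈ s, ‖X i - X j‖ ^ 2 + c * (#s - 1) := by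
  rw [← add_sum_erase s _ hi, ← add_sum_erase s _ hi, sub_self, sub_self,
    sum_congr rfl fun j hj => h i j (ne_of_mem_erase hj).symm, sum_add_distrib, sum_const,
    card_erase_of_mem hi, nsmul_eq_mul, Nat.cast_sub (card_pos.2 ⟨i, hi⟩)]
  simp only [norm_zero]
  ring

theorem IsSqDistShift.nearestSet_eq (h : IsSqDistShift c X X') :
    nearestSet X' = nearestSet X := by
  funext i
  ext j
  simp only [nearestSet, mem_filter, mem_erase, mem_univ, and_true]
  refine and_congr_right fun hj => forall₂_congr fun l hl => ?_
  rw [← sq_le_sq₀ (norm_nonneg _) (norm_nonneg _), ← sq_le_sq₀ (norm_nonneg _) (norm_nonneg _),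
    h i j (Ne.symm hj), h i l (Ne.symm hl), add_le_add_iff_right]

theorem IsSqDistShift.condAffinity_eq (h : IsSqDistShift c X X') :
    condAffinity X' = condAffinity X := by
  funext σ i j
  unfold condAffinity
  rw [h.nearestSet_eq]
  by_cases hji : j = i
  · simp only [hji, if_true]
  rw [if_neg hji, if_neg hji]
  refine if_congr Iff.rfl rfl ?_
  have hexp : ∀ l ≠ i, Real.exp (-‖X' i - X' l‖ ^ 2 / (2 * σ ^ 2)) =
      Real.exp (-c / (2 * σ ^ 2)) * Real.exp (-‖X i - X l‖ ^ 2 / (2 * σ ^ 2)) := by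
    intro l hl
    rw [← Real.exp_add, h i l (Ne.symm hl)]
    ring_nf
  rw [hexp j hji, sum_congr rfl fun l hl => hexp l (ne_of_mem_erase hl), ← mul_sum,
    mul_div_mul_left _ _ (Real.exp_ne_zero _)]

theorem TSNE_eq_of_condAffinity_eq (h : condAffinity X' = condAffinity X) (d : ℕ) (ρ : ℝ) :
    TSNE d ρ X = TSNE d ρ X' := by
  have hσ : sigmaStar X' = sigmaStar X := by
    unfold sigmaStar IsCalibrated
    rw [h]
  have hloss : tsneLoss (d := d) X' = tsneLoss X := by
    unfold tsneLoss inAffinity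
    rw [h, hσ]
  unfold TSNE
  rw [hloss]

end Affinity

section Scatter

variable {E E' : Type*} [NormedAddCommGroup E] [InnerProductSpace ℝ E]
  [NormedAddCommGroup E'] [InnerProductSpace ℝ E'] (X : Fin n → E) (s : Finset (Fin n))

def scatter : ℝ := ∑ i ∈ s, ‖X i - centroid X s‖ ^ 2

@[simp]
theorem scatter_empty : scatter X ∅ = 0 := rfl

theorem sum_sub_centroid : ∑ i ∈ s, (X i - centroid X s) = 0 := by
  rcases s.eq_empty_or_nonempty with rfl | hs
  · simp
  rw [sum_sub_distrib, sum_const, centroid, ← Nat.cast_smul_eq_nsmul ℝ, smul_smul,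
    mul_inv_cancel₀ (by exact_mod_cast hs.card_ne_zero), one_smul, sub_self]

theorem sum_norm_sub_sq_eq_scatter_add (v : E) :
    ∑ i ∈ s, ‖X i - v‖ ^ 2 = scatter X s + #s * ‖centroid X s - v‖ ^ 2 := by
  calc ∑ i ∈ s, ‖X i - v‖ ^ 2
      = ∑ i ∈ s, (‖X i - centroid X s‖ ^ 2 + 2 * ⟪X i - centroid X s, centroid X s - v⟫
          + ‖centroid X s - v‖ ^ 2) :=
        sum_congr rfl fun i _ => by rw [← norm_add_sq_real, sub_add_sub_cancel]
    _ = scatter X s + #s * ‖centroid X s - v‖ ^ 2 := by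
        rw [sum_add_distrib, sum_add_distrib, ← mul_sum, ← sum_inner, sum_sub_centroid]
        simp [scatter]

theorem two_mul_card_mul_scatter :
    2 * #s * scatter X s = ∑ i ∈ s, ∑ j ∈ s, ‖X i - X j‖ ^ 2 := by
  calc 2 * #s * scatter X s
      = ∑ i ∈ s, (scatter X s + #s * ‖X i - centroid X s‖ ^ 2) := by
        rw [sum_add_distrib, sum_const, nsmul_eq_mul, ← mul_sum, scatter]
        ring
    _ = ∑ i ∈ s, ∑ j ∈ s, ‖X i - X j‖ ^ 2 := sum_congr rfl fun i _ => by
        rw [norm_sub_rev, ← sum_norm_sub_sq_eq_scatter_add]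
        exact sum_congr rfl fun j _ => by rw [norm_sub_rev]

variable {X s} {X' : Fin n → E'} {c : ℝ}

theorem IsSqDistShift.scatter_eq (h : IsSqDistShift c X X') (hs : s.Nonempty) :
    scatter X' s = scatter X s + c / 2 * (#s - 1) := by
  have hcard : (2 * #s : ℝ) ≠ 0 := by positivity
  apply mul_left_cancel₀ hcard
  rw [two_mul_card_mul_scatter, sum_congr rfl fun i hi => h.sum_norm_sub_sq hi, sum_add_distrib,
    ← two_mul_card_mul_scatter, sum_const, nsmul_eq_mul]
  ring

end Scatter

section CalinskiHarabasz

variable {E E' : Type*} [NormedAddCommGroup E] [InnerProductSpace ℝ E]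
  [NormedAddCommGroup E'] [InnerProductSpace ℝ E'] (X : Fin n → E) (ℓ : Fin n → Fin k)

theorem cluster_nonempty_iff {m : Fin k} : (cluster ℓ m).Nonempty ↔ m ∈ univ.image ℓ := by
  simp [cluster, Finset.Nonempty]

theorem sum_scatter_cluster_eq_sum_image :
    ∑ m, scatter X (cluster ℓ m) = ∑ m ∈ univ.image ℓ, scatter X (cluster ℓ m) := by
  refine (sum_subset (subset_univ _) fun m _ hm => ?_).symm
  rw [not_nonempty_iff_eq_empty.1 ((cluster_nonempty_iff ℓ).not.2 hm), scatter_empty]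

theorem chNum_eq_scatter_sub :
    chNum X ℓ = ((k : ℝ) - 1)⁻¹ * (scatter X univ - ∑ m, scatter X (cluster ℓ m)) := by
  have htotal : scatter X univ = ∑ m, (scatter X (cluster ℓ m) +
      #(cluster ℓ m) * ‖centroid X (cluster ℓ m) - centroid X univ‖ ^ 2) := by
    rw [scatter, ← sum_fiberwise univ ℓ]
    exact sum_congr rfl fun m _ => sum_norm_sub_sq_eq_scatter_add X _ _
  rw [htotal, sum_add_distrib, add_sub_cancel_left, chNum]

theorem chDen_eq_sum_scatter :
    chDen X ℓ = ((n : ℝ) - k)⁻¹ * ∑ m, scatter X (cluster ℓ m) := rfl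

variable {X} {X' : Fin n → E'} {c : ℝ}

theorem IsSqDistShift.sum_scatter_cluster (h : IsSqDistShift c X X') :
    ∑ m, scatter X' (cluster ℓ m) =
      ∑ m, scatter X (cluster ℓ m) + c / 2 * (n - #(univ.image ℓ)) := by
  have hcard : ∑ m ∈ univ.image ℓ, #(cluster ℓ m) = n :=
    (card_eq_sum_card_image ℓ univ).symm.trans (card_fin n)
  rw [sum_scatter_cluster_eq_sum_image, sum_scatter_cluster_eq_sum_image,
    sum_congr rfl fun m hm => h.scatter_eq ((cluster_nonempty_iff ℓ).2 hm), sum_add_distrib,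
    ← mul_sum, sum_sub_distrib, sum_const, nsmul_eq_mul, mul_one, ← Nat.cast_sum, hcard]

theorem IsSqDistShift.chDen_eq (h : IsSqDistShift c X X') :
    chDen X' ℓ = chDen X ℓ + c / 2 * ((n - #(univ.image ℓ)) / (n - k)) := by
  rw [chDen_eq_sum_scatter, chDen_eq_sum_scatter, h.sum_scatter_cluster]
  ring

theorem IsSqDistShift.chNum_eq [NeZero n] (h : IsSqDistShift c X X') :
    chNum X' ℓ = chNum X ℓ + c / 2 * ((#(univ.image ℓ) - 1) / (k - 1)) := by
  rw [chNum_eq_scatter_sub, chNum_eq_scatter_sub, h.scatter_eq univ_nonempty,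
    h.sum_scatter_cluster, card_univ, Fintype.card_fin]
  ring

end CalinskiHarabasz

section Index

variable {E : Type*} [NormedAddCommGroup E] [NormedSpace ℝ E] {X : Fin n → E} {ℓ : Fin n → Fin k}

theorem chNum_nonneg (hk : 1 ≤ k) : 0 ≤ chNum X ℓ :=
  mul_nonneg (inv_nonneg.2 (sub_nonneg.2 (by exact_mod_cast hk)))
    (sum_nonneg fun _ _ => by positivity)

theorem chDen_nonneg (hkn : k ≤ n) : 0 ≤ chDen X ℓ :=
  mul_nonneg (inv_nonneg.2 (sub_nonneg.2 (by exact_mod_cast hkn)))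
    (sum_nonneg fun _ _ => by positivity)

theorem chDen_lt_chNum_of_coe_le_CHindex {e : ℝ} (he : 1 < e) (hN : 0 ≤ chNum X ℓ)
    (hD : 0 ≤ chDen X ℓ) (h : (e : EReal) ≤ CHindex X ℓ) :
    chDen X ℓ < chNum X ℓ ∧ e * chDen X ℓ ≤ chNum X ℓ := by
  unfold CHindex at h
  split_ifs at h with hD0 hN0
  · exact absurd h (by exact_mod_cast he.not_ge)
  · rw [hD0, mul_zero]
    exact ⟨hN.lt_of_ne' hN0, hN⟩
  · have hDpos := hD.lt_of_ne' hD0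
    have heD := (le_div_iff₀ hDpos).1 (EReal.coe_le_coe_iff.1 h)
    exact ⟨(lt_mul_left hDpos he).trans_le heD, heD⟩

end Index

theorem exists_add_mul_eq_mul_add_mul {N D a b e : ℝ} (hD : 0 ≤ D) (hDN : D < N)
    (heD : e * D ≤ N) (he : 1 < e) (ha : a ≤ 1) (hb : 1 ≤ b) :
    ∃ t, 0 ≤ t ∧ 0 < D + t * b ∧ N + t * a = e * (D + t * b) := by
  have hpos : 0 < e * b - a := by nlinarith
  refine ⟨(N - e * D) / (e * b - a), div_nonneg (by linarith) hpos.le, ?_, ?_⟩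
  · have hden : D + (N - e * D) / (e * b - a) * b = (b * N - a * D) / (e * b - a) := by
      field_simp
      ring
    rw [hden]
    exact div_pos (by nlinarith) hpos
  · field_simp
    ring

theorem CH_impostor_general (n k d : ℕ) (hk : 1 < k) (hkn : k < n)
    (X : Fin n → EuclideanSpace ℝ (Fin (n - 1)))
    (ℓ : Fin n → Fin k) :
    ∀ ε : EReal, 1 < ε → ε ≤ CHindex X ℓ →
      ∃ Xε : Fin n → EuclideanSpace ℝ (Fin (n - 1)),
        CHindex Xε ℓ = ε ∧
        ∀ ρ : ℝ, 1 < ρ → ρ < (n : ℝ) - 1 → TSNE d ρ X = TSNE d ρ Xε := by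
  intro ε hε1 hεCH
  induction ε using EReal.rec with
  | bot => exact absurd hε1 not_lt_bot
  | top => exact ⟨X, top_le_iff.1 hεCH, fun _ _ _ => rfl⟩
  | coe e =>
    have : NeZero n := ⟨by omega⟩
    have hkR : (1 : ℝ) < k := by exact_mod_cast hk
    have hknR : (k : ℝ) < n := by exact_mod_cast hkn
    have hK : (#(univ.image ℓ) : ℝ) ≤ k := by
      exact_mod_cast (card_le_univ _).trans_eq (Fintype.card_fin k)
    obtain ⟨hDN, heD⟩ := chDen_lt_chNum_of_coe_le_CHindex (by exact_mod_cast hε1)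
      (chNum_nonneg hk.le) (chDen_nonneg hkn.le) hεCH
    obtain ⟨t, ht, hpos, heq⟩ := exists_add_mul_eq_mul_add_mul (chDen_nonneg hkn.le) hDN heD
      (a := (#(univ.image ℓ) - 1) / (k - 1)) (b := (n - #(univ.image ℓ)) / (n - k))
      (by exact_mod_cast hε1) ((div_le_one (by linarith)).2 (by linarith))
      ((one_le_div (by linarith)).2 (by linarith))
    obtain ⟨Xε, hXε⟩ := exists_isSqDistShift X (by positivity : 0 ≤ 2 * t)
    have hden := hXε.chDen_eq ℓ
    have hnum := hXε.chNum_eq ℓ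
    rw [mul_div_cancel_left₀ t two_ne_zero] at hden hnum
    refine ⟨Xε, ?_, fun ρ _ _ => TSNE_eq_of_condAffinity_eq hXε.condAffinity_eq d ρ⟩
    rw [CHindex, hden, if_neg hpos.ne', hnum, heq, mul_div_cancel_right₀ _ hpos.ne']

/-- Theorem `unclustHammerCH`: any stationary t-SNE output can be produced by
an input whose Calinski–Harabasz index is any prescribed value in `(1, CH(X)]`. -/
theorem CH_impostor (n k d : ℕ) (hk : 1 < k) (hkn : k < n) (hd : 1 ≤ d)
    (X : Fin n → EuclideanSpace ℝ (Fin (n - 1)))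
    (ℓ : Fin n → Fin k)
    (hCH : 1 < CHindex X ℓ) :
    ∀ ε : EReal, 1 < ε → ε ≤ CHindex X ℓ →
      ∃ Xε : Fin n → EuclideanSpace ℝ (Fin (n - 1)),
        CHindex Xε ℓ = ε ∧
        ∀ ρ : ℝ, 1 < ρ → ρ < (n : ℝ) - 1 → TSNE d ρ X = TSNE d ρ Xε :=
  CH_impostor_general n k d hk hkn X ℓ

end TSNEPaper
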